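/- Let k be a non-negative integer and let s, s' > k + 1/2. Then the remainder of the small-energy expansion of the free resolvent is o(|z|^{(k−1)/2}): for every ε > 0 there exists δ > 0 such that for every nonzero z in the closed upper half-plane with |z| < δ and every ψ ∈ L^{2,s}(ℝ), ‖R₀(z)ψ − Σ_{j=0}^{k} (i z^{1/2})^{j−1} G_j ψ‖_{−s'} ≤ ε · |z|^{(k−1)/2} · ‖ψ‖_s. -/

import Mathlib

/-!
Put `w = i z^{1/2}`, so that `Re w ≤ 0` and `|w| = |z|^{1/2}`. The remainder is the integral
operator with kernel `-(2w)⁻¹ (e^{w|x-y|} - ∑_{j ≤ k} (w|x-y|)^j / j!)`. For `Re u ≤ 0` the Taylor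
remainder of `exp` is `O(|u|^{k+1})` near `0` and `O(|u|^k)` at infinity, hence `O(|u|^a)` for every
`a ∈ [k, k+1]`. With `|x-y|^a ≤ 2^{a/2} ⟨x⟩^a ⟨y⟩^a`, where `⟨x⟩ = (1+x²)^{1/2}`, the kernel is
`O(|z|^{(a-1)/2} ⟨x⟩^a ⟨y⟩^a)`, and Cauchy–Schwarz in `y`, then in `x`, bound the remainder from
`L^{2,s}` to `L^{2,-s'}` by `|z|^{(a-1)/2}` as long as `a + 1/2 < min s s'`. Taking `a > k` leaves
the factor `|z|^{(a-k)/2} → 0`.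
-/

open MeasureTheory Filter

/-- The weighted norm `‖ψ‖_s = (∫ (1+x²)^s |ψ(x)|² dx)^{1/2}`. -/
noncomputable def wnorm (s : ℝ) (ψ : ℝ → ℂ) : ℝ :=
  (∫ x : ℝ, (1 + x ^ 2) ^ s * ‖ψ x‖ ^ 2) ^ ((1 : ℝ) / 2)

/-- Membership in the weighted space `L^{2,s}(ℝ)`. -/
def MemL2s (s : ℝ) (ψ : ℝ → ℂ) : Prop :=
  Measurable ψ ∧ Integrable (fun x : ℝ => (1 + x ^ 2) ^ s * ‖ψ x‖ ^ 2)

/-- The free resolvent `(R₀(z)ψ)(x) = −(1/(2i z^{1/2})) ∫ exp(i z^{1/2}|x−y|) ψ(y) dy`,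
with the principal square root `z^{1/2}`. -/
noncomputable def R0 (z : ℂ) (ψ : ℝ → ℂ) (x : ℝ) : ℂ :=
  -(1 / (2 * Complex.I * z ^ ((1 : ℂ) / 2))) *
    ∫ y : ℝ, Complex.exp (Complex.I * z ^ ((1 : ℂ) / 2) * ((|x - y| : ℝ) : ℂ)) * ψ y

/-- The integral operator `(G_j ψ)(x) = -(1/(2·j!)) ∫ |x-y|^j ψ(y) dy`. -/
noncomputable def Gop (j : ℕ) (ψ : ℝ → ℂ) (x : ℝ) : ℂ :=
  -(1 / (2 * (Nat.factorial j : ℂ))) * ∫ y : ℝ, ((|x - y| : ℝ) : ℂ) ^ j * ψ y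

open Finset

lemma integrable_one_add_sq_rpow {b : ℝ} (hb : b < -(1 / 2)) :
    Integrable fun x : ℝ => (1 + x ^ 2) ^ b := by
  have h := integrable_rpow_neg_one_add_norm_sq (E := ℝ) (μ := volume)
    (r := -(2 * b)) (by simp; linarith)
  convert h using 2 with x
  rw [Real.norm_eq_abs, sq_abs]
  ring_nf

lemma one_add_sq_rpow_half_sq (x b : ℝ) : ((1 + x ^ 2) ^ (b / 2)) ^ 2 = (1 + x ^ 2) ^ b := by
  rw [← Real.rpow_mul_natCast (by positivity)]
  ring_nf

lemma memLp_two_one_add_sq_rpow {b : ℝ} (hb : b < -(1 / 2)) :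
    MemLp (fun x : ℝ => (1 + x ^ 2) ^ (b / 2)) 2 := by
  rw [memLp_two_iff_integrable_sq (by fun_prop : Measurable _).aestronglyMeasurable]
  simpa only [one_add_sq_rpow_half_sq] using integrable_one_add_sq_rpow hb

lemma wnorm_nonneg (s : ℝ) (ψ : ℝ → ℂ) : 0 ≤ wnorm s ψ :=
  Real.rpow_nonneg (integral_nonneg fun x => by positivity) _

lemma one_add_sq_rpow_mul_rpow_mul (y c s t : ℝ) :
    (1 + y ^ 2) ^ ((c - s) / 2) * ((1 + y ^ 2) ^ (s / 2) * t) = (1 + y ^ 2) ^ (c / 2) * t := by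
  rw [← mul_assoc, ← Real.rpow_add (by positivity)]
  ring_nf

lemma abs_sub_rpow_le (x y : ℝ) {c : ℝ} (hc : 0 ≤ c) :
    |x - y| ^ c ≤ 2 ^ (c / 2) * (1 + x ^ 2) ^ (c / 2) * (1 + y ^ 2) ^ (c / 2) := by
  have hsq : (x - y) ^ 2 ≤ 2 * (1 + x ^ 2) * (1 + y ^ 2) := by
    nlinarith [sq_nonneg (x + y), sq_nonneg (x * y)]
  calc |x - y| ^ c = ((x - y) ^ 2) ^ (c / 2) := by
        rw [← sq_abs, ← Real.rpow_natCast, ← Real.rpow_mul (abs_nonneg _)]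
        ring_nf
    _ ≤ (2 * (1 + x ^ 2) * (1 + y ^ 2)) ^ (c / 2) := by gcongr
    _ = 2 ^ (c / 2) * (1 + x ^ 2) ^ (c / 2) * (1 + y ^ 2) ^ (c / 2) := by
        rw [Real.mul_rpow (by positivity) (by positivity),
          Real.mul_rpow (by positivity) (by positivity)]

lemma norm_mul_le_of_norm_le_abs_sub_rpow {F ψ : ℝ → ℂ} {M c x : ℝ} (hM : 0 ≤ M) (hc : 0 ≤ c)
    (hF : ∀ y, ‖F y‖ ≤ M * |x - y| ^ c) (y : ℝ) :
    ‖F y * ψ y‖ ≤ M * 2 ^ (c / 2) * (1 + x ^ 2) ^ (c / 2) * ((1 + y ^ 2) ^ (c / 2) * ‖ψ y‖) :=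
  calc ‖F y * ψ y‖ ≤ M * |x - y| ^ c * ‖ψ y‖ := by
        rw [norm_mul]; gcongr; exact hF y
    _ ≤ M * (2 ^ (c / 2) * (1 + x ^ 2) ^ (c / 2) * (1 + y ^ 2) ^ (c / 2)) * ‖ψ y‖ := by
        gcongr; exact abs_sub_rpow_le x y hc
    _ = _ := by ring

namespace MemL2s

variable {s : ℝ} {ψ : ℝ → ℂ}

lemma memLp_two (hψ : MemL2s s ψ) :
    MemLp (fun x : ℝ => (1 + x ^ 2) ^ (s / 2) * ‖ψ x‖) 2 := by
  have hm : Measurable fun x : ℝ => (1 + x ^ 2) ^ (s / 2) * ‖ψ x‖ :=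
    (by fun_prop : Measurable fun x : ℝ => (1 + x ^ 2) ^ (s / 2)).mul hψ.1.norm
  rw [memLp_two_iff_integrable_sq hm.aestronglyMeasurable]
  simpa only [mul_pow, one_add_sq_rpow_half_sq] using hψ.2

lemma integrable_one_add_sq_rpow_mul_norm (hψ : MemL2s s ψ) {c : ℝ} (hc : c - s < -(1 / 2)) :
    Integrable fun y : ℝ => (1 + y ^ 2) ^ (c / 2) * ‖ψ y‖ := by
  simpa only [Pi.mul_def, one_add_sq_rpow_mul_rpow_mul] using
    (memLp_two_one_add_sq_rpow hc).integrable_mul hψ.memLp_two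

lemma integral_one_add_sq_rpow_mul_norm_le (hψ : MemL2s s ψ) {c : ℝ} (hc : c - s < -(1 / 2)) :
    ∫ y : ℝ, (1 + y ^ 2) ^ (c / 2) * ‖ψ y‖ ≤
      (∫ y : ℝ, (1 + y ^ 2) ^ (c - s)) ^ ((1 : ℝ) / 2) * wnorm s ψ := by
  have H := integral_mul_le_Lp_mul_Lq_of_nonneg Real.HolderConjugate.two_two
    (f := fun y : ℝ => (1 + y ^ 2) ^ ((c - s) / 2))
    (g := fun y : ℝ => (1 + y ^ 2) ^ (s / 2) * ‖ψ y‖)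
    (ae_of_all _ fun y => by positivity) (ae_of_all _ fun y => by positivity)
    (by simpa using memLp_two_one_add_sq_rpow hc) (by simpa using hψ.memLp_two)
  simpa only [Real.rpow_two, mul_pow, one_add_sq_rpow_half_sq, one_add_sq_rpow_mul_rpow_mul,
    wnorm] using H

lemma integrable_mul_of_norm_le (hψ : MemL2s s ψ) {F : ℝ → ℂ} (hFm : AEStronglyMeasurable F)
    {M c x : ℝ} (hM : 0 ≤ M) (hc : 0 ≤ c) (hcs : c - s < -(1 / 2))
    (hF : ∀ y, ‖F y‖ ≤ M * |x - y| ^ c) :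
    Integrable fun y => F y * ψ y :=
  ((hψ.integrable_one_add_sq_rpow_mul_norm hcs).const_mul _).mono'
    (hFm.mul hψ.1.aestronglyMeasurable)
    (ae_of_all _ (norm_mul_le_of_norm_le_abs_sub_rpow hM hc hF))

lemma norm_integral_mul_le (hψ : MemL2s s ψ) {F : ℝ → ℂ} {M c x : ℝ} (hM : 0 ≤ M) (hc : 0 ≤ c)
    (hcs : c - s < -(1 / 2)) (hF : ∀ y, ‖F y‖ ≤ M * |x - y| ^ c) :
    ‖∫ y, F y * ψ y‖ ≤ M * 2 ^ (c / 2) * (1 + x ^ 2) ^ (c / 2) *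
      ((∫ y : ℝ, (1 + y ^ 2) ^ (c - s)) ^ ((1 : ℝ) / 2) * wnorm s ψ) :=
  calc ‖∫ y, F y * ψ y‖ ≤ ∫ y, ‖F y * ψ y‖ := norm_integral_le_integral_norm _
    _ ≤ ∫ y, M * 2 ^ (c / 2) * (1 + x ^ 2) ^ (c / 2) * ((1 + y ^ 2) ^ (c / 2) * ‖ψ y‖) :=
        integral_mono_of_nonneg (ae_of_all _ fun _ => norm_nonneg _)
          ((hψ.integrable_one_add_sq_rpow_mul_norm hcs).const_mul _)
          (ae_of_all _ (norm_mul_le_of_norm_le_abs_sub_rpow hM hc hF))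
    _ ≤ _ := by
        rw [integral_const_mul]
        gcongr
        exact hψ.integral_one_add_sq_rpow_mul_norm_le hcs

end MemL2s

lemma wnorm_neg_le_of_norm_le {s a B : ℝ} (hB : 0 ≤ B) (has : a - s < -(1 / 2)) {F : ℝ → ℂ}
    (hF : ∀ x, ‖F x‖ ≤ B * (1 + x ^ 2) ^ (a / 2)) :
    wnorm (-s) F ≤ B * (∫ x : ℝ, (1 + x ^ 2) ^ (a - s)) ^ ((1 : ℝ) / 2) := by
  have hpt : ∀ x : ℝ, (1 + x ^ 2) ^ (-s) * ‖F x‖ ^ 2 ≤ B ^ 2 * (1 + x ^ 2) ^ (a - s) := fun x =>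
    calc (1 + x ^ 2) ^ (-s) * ‖F x‖ ^ 2 ≤ (1 + x ^ 2) ^ (-s) * (B * (1 + x ^ 2) ^ (a / 2)) ^ 2 := by
          gcongr; exact hF x
      _ = B ^ 2 * (1 + x ^ 2) ^ (a - s) := by
          rw [mul_pow, one_add_sq_rpow_half_sq, mul_left_comm, ← Real.rpow_add (by positivity),
            neg_add_eq_sub]
  calc wnorm (-s) F ≤ (∫ x : ℝ, B ^ 2 * (1 + x ^ 2) ^ (a - s)) ^ ((1 : ℝ) / 2) := by
        refine Real.rpow_le_rpow (integral_nonneg fun x => by positivity) ?_ (by norm_num)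
        exact integral_mono_of_nonneg (ae_of_all _ fun x => by positivity)
          ((integrable_one_add_sq_rpow has).const_mul _) (ae_of_all _ hpt)
    _ = B * (∫ x : ℝ, (1 + x ^ 2) ^ (a - s)) ^ ((1 : ℝ) / 2) := by
        rw [integral_const_mul, Real.mul_rpow (by positivity)
          (integral_nonneg fun x => by positivity), ← Real.sqrt_eq_rpow, Real.sqrt_sq hB]

noncomputable def expRemainder (k : ℕ) (u : ℂ) : ℂ :=
  Complex.exp u - ∑ j ∈ range (k + 1), u ^ j / (j.factorial : ℂ)

lemma norm_expRemainder_le_of_norm_le_one (k : ℕ) {u : ℂ} (hu : ‖u‖ ≤ 1) :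
    ‖expRemainder k u‖ ≤ 2 * ‖u‖ ^ (k + 1) := by
  have hu' : ‖u‖ / (k + 1).succ ≤ 1 / 2 := by
    rw [div_le_iff₀ (by positivity)]; push_cast; linarith
  calc ‖expRemainder k u‖ ≤ ‖u‖ ^ (k + 1) / (k + 1).factorial * 2 := Complex.exp_bound' hu'
    _ ≤ ‖u‖ ^ (k + 1) / 1 * 2 := by
        gcongr; exact_mod_cast (k + 1).factorial_pos
    _ = 2 * ‖u‖ ^ (k + 1) := by ring

lemma norm_expRemainder_le_of_one_le_norm (k : ℕ) {u : ℂ} (hre : u.re ≤ 0) (hu : 1 ≤ ‖u‖) :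
    ‖expRemainder k u‖ ≤ (k + 2) * ‖u‖ ^ k := by
  have hterm : ∀ j ∈ range (k + 1), ‖u ^ j / (j.factorial : ℂ)‖ ≤ ‖u‖ ^ k := fun j hj =>
    calc ‖u ^ j / (j.factorial : ℂ)‖ = ‖u‖ ^ j / j.factorial := by
          rw [norm_div, norm_pow, Complex.norm_natCast]
      _ ≤ ‖u‖ ^ j / 1 := by gcongr; exact_mod_cast j.factorial_pos
      _ ≤ ‖u‖ ^ k := by
          rw [div_one]; exact pow_le_pow_right₀ hu (Nat.lt_succ_iff.1 (mem_range.1 hj))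
  calc ‖expRemainder k u‖
      ≤ ‖Complex.exp u‖ + ‖∑ j ∈ range (k + 1), u ^ j / (j.factorial : ℂ)‖ := norm_sub_le _ _
    _ ≤ 1 + (k + 1) * ‖u‖ ^ k := by
        gcongr
        · rw [Complex.norm_exp]; exact Real.exp_le_one_iff.2 hre
        · refine (norm_sum_le _ _).trans ((sum_le_sum hterm).trans_eq ?_)
          simp
    _ ≤ (k + 2) * ‖u‖ ^ k := by nlinarith [one_le_pow₀ (n := k) hu]

lemma norm_expRemainder_le (k : ℕ) {u : ℂ} (hre : u.re ≤ 0) {a : ℝ} (hka : k ≤ a)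
    (hak : a ≤ k + 1) : ‖expRemainder k u‖ ≤ (k + 2) * ‖u‖ ^ a := by
  rcases le_or_gt ‖u‖ 1 with hu | hu
  · calc ‖expRemainder k u‖ ≤ 2 * ‖u‖ ^ (k + 1) := norm_expRemainder_le_of_norm_le_one k hu
      _ ≤ (k + 2) * ‖u‖ ^ a := by
          rw [← Real.rpow_natCast]
          refine mul_le_mul (by linarith [(k.cast_nonneg : (0 : ℝ) ≤ k)]) ?_ (by positivity)
            (by positivity)
          exact Real.rpow_le_rpow_of_exponent_ge' (norm_nonneg _) hu
            (k.cast_nonneg.trans hka) (by push_cast; exact hak)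
  · calc ‖expRemainder k u‖ ≤ (k + 2) * ‖u‖ ^ k := norm_expRemainder_le_of_one_le_norm k hre hu.le
      _ ≤ (k + 2) * ‖u‖ ^ a := by
          rw [← Real.rpow_natCast]
          exact mul_le_mul_of_nonneg_left (Real.rpow_le_rpow_of_exponent_le hu.le hka)
            (by positivity)

lemma im_cpow_one_half_nonneg {z : ℂ} (hz : 0 ≤ z.im) : 0 ≤ (z ^ ((1 : ℂ) / 2)).im := by
  rcases eq_or_ne z 0 with rfl | hz0
  · simp
  have harg : (Complex.log z * ((1 : ℂ) / 2)).im = z.arg / 2 := by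
    simp [Complex.mul_im, Complex.log_im]
    ring
  rw [Complex.cpow_def_of_ne_zero hz0, Complex.exp_im, harg]
  refine mul_nonneg (Real.exp_nonneg _) (Real.sin_nonneg_of_nonneg_of_le_pi ?_ ?_)
  · linarith [Complex.arg_nonneg_iff.2 hz]
  · linarith [Complex.arg_le_pi z, Real.pi_pos]

lemma norm_cpow_one_half (z : ℂ) : ‖z ^ ((1 : ℂ) / 2)‖ = ‖z‖ ^ ((1 : ℝ) / 2) := by
  simpa using Complex.norm_cpow_real z (1 / 2)

noncomputable def resolventRemainder (k : ℕ) (z : ℂ) (ψ : ℝ → ℂ) (x : ℝ) : ℂ :=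
  R0 z ψ x - ∑ j ∈ range (k + 1), (Complex.I * z ^ ((1 : ℂ) / 2)) ^ ((j : ℤ) - 1) * Gop j ψ x

section Remainder

variable {k : ℕ} {z : ℂ} {s : ℝ} {ψ : ℝ → ℂ}

lemma resolventRemainder_eq (hψ : MemL2s s ψ) (hks : k + 1 / 2 < s) (hz : z ≠ 0)
    (him : 0 ≤ z.im) (x : ℝ) :
    resolventRemainder k z ψ x = -(1 / (2 * (Complex.I * z ^ ((1 : ℂ) / 2)))) *
      ∫ y : ℝ, expRemainder k (Complex.I * z ^ ((1 : ℂ) / 2) * ((|x - y| : ℝ) : ℂ)) * ψ y := by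
  set w := Complex.I * z ^ ((1 : ℂ) / 2) with hw
  have hw0 : w ≠ 0 := mul_ne_zero Complex.I_ne_zero (by simpa [Complex.cpow_eq_zero_iff] using hz)
  have hwre : w.re ≤ 0 := by simpa [hw] using im_cpow_one_half_nonneg him
  have hexp : Integrable fun y => Complex.exp (w * ((|x - y| : ℝ) : ℂ)) * ψ y := by
    refine hψ.integrable_mul_of_norm_le (M := 1) (c := 0) (x := x)
      (by fun_prop : Measurable fun y : ℝ =>
        Complex.exp (w * ((|x - y| : ℝ) : ℂ))).aestronglyMeasurable
      zero_le_one le_rfl (by linarith [(k.cast_nonneg : (0 : ℝ) ≤ k)]) fun y => ?_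
    rw [Real.rpow_zero, mul_one, Complex.norm_exp]
    refine Real.exp_le_one_iff.2 ?_
    simpa using mul_nonpos_of_nonpos_of_nonneg hwre (abs_nonneg (x - y))
  have hpow : ∀ j ∈ range (k + 1),
      Integrable fun y => (w * ((|x - y| : ℝ) : ℂ)) ^ j / (j.factorial : ℂ) * ψ y := by
    intro j hj
    have hjk : (j : ℝ) ≤ k := by exact_mod_cast Nat.lt_succ_iff.1 (mem_range.1 hj)
    refine hψ.integrable_mul_of_norm_le (M := ‖w‖ ^ j / j.factorial) (c := j) (x := x)
      (by fun_prop : Measurable fun y : ℝ =>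
        (w * ((|x - y| : ℝ) : ℂ)) ^ j / (j.factorial : ℂ)).aestronglyMeasurable
      (by positivity) j.cast_nonneg (by linarith) fun y => ?_
    simp [mul_pow, div_eq_mul_inv, mul_right_comm]
  have hterm : ∀ j ∈ range (k + 1), w ^ ((j : ℤ) - 1) * Gop j ψ x
      = -(1 / (2 * w)) * ∫ y : ℝ, (w * ((|x - y| : ℝ) : ℂ)) ^ j / (j.factorial : ℂ) * ψ y := by
    intro j _
    simp_rw [mul_pow, mul_div_right_comm, mul_assoc, integral_const_mul, Gop, zpow_sub₀ hw0,
      zpow_natCast, zpow_one]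
    field_simp
  have hR0 : R0 z ψ x = -(1 / (2 * w)) * ∫ y : ℝ, Complex.exp (w * ((|x - y| : ℝ) : ℂ)) * ψ y := by
    rw [R0, hw, mul_assoc 2]
  rw [resolventRemainder, ← hw, hR0, sum_congr rfl hterm, ← mul_sum, ← integral_finsetSum _ hpow,
    ← mul_sub, ← integral_sub hexp (integrable_finsetSum _ hpow)]
  simp_rw [expRemainder, sub_mul, sum_mul]

lemma norm_resolventRemainder_le (hψ : MemL2s s ψ) (hz : z ≠ 0) (him : 0 ≤ z.im) {a : ℝ}
    (hka : k ≤ a) (hak : a ≤ k + 1) (has : a - s < -(1 / 2)) (x : ℝ) :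
    ‖resolventRemainder k z ψ x‖ ≤ ((k + 2) / 2 * 2 ^ (a / 2) *
      (∫ y : ℝ, (1 + y ^ 2) ^ (a - s)) ^ ((1 : ℝ) / 2) * wnorm s ψ * ‖z‖ ^ ((a - 1) / 2)) *
        (1 + x ^ 2) ^ (a / 2) := by
  set w := Complex.I * z ^ ((1 : ℂ) / 2) with hw
  have hwz : ‖w‖ = ‖z‖ ^ ((1 : ℝ) / 2) := by
    rw [hw, norm_mul, Complex.norm_I, one_mul, norm_cpow_one_half]
  have hw0 : 0 < ‖w‖ := by rw [hwz]; exact Real.rpow_pos_of_pos (norm_pos_iff.2 hz) _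
  have hwre : w.re ≤ 0 := by simpa [hw] using im_cpow_one_half_nonneg him
  have hkernel : ∀ y,
      ‖expRemainder k (w * ((|x - y| : ℝ) : ℂ))‖ ≤ (k + 2) * ‖w‖ ^ a * |x - y| ^ a := by
    intro y
    have hre : (w * ((|x - y| : ℝ) : ℂ)).re ≤ 0 := by
      simpa using mul_nonpos_of_nonpos_of_nonneg hwre (abs_nonneg (x - y))
    calc ‖expRemainder k (w * ((|x - y| : ℝ) : ℂ))‖ ≤ (k + 2) * ‖w * ((|x - y| : ℝ) : ℂ)‖ ^ a :=
          norm_expRemainder_le k hre hka hak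
      _ = (k + 2) * ‖w‖ ^ a * |x - y| ^ a := by
          rw [norm_mul, Complex.norm_real, Real.norm_eq_abs, abs_abs,
            Real.mul_rpow hw0.le (abs_nonneg _), mul_assoc]
  have hpow : ‖w‖ ^ a / ‖w‖ = ‖z‖ ^ ((a - 1) / 2) := by
    rw [← Real.rpow_sub_one hw0.ne', hwz, ← Real.rpow_mul (norm_nonneg _)]
    ring_nf
  rw [resolventRemainder_eq hψ (by linarith) hz him, ← hw, norm_mul]
  calc ‖-(1 / (2 * w))‖ * ‖∫ y, expRemainder k (w * ((|x - y| : ℝ) : ℂ)) * ψ y‖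
      ≤ 1 / (2 * ‖w‖) * ((k + 2) * ‖w‖ ^ a * 2 ^ (a / 2) * (1 + x ^ 2) ^ (a / 2) *
          ((∫ y : ℝ, (1 + y ^ 2) ^ (a - s)) ^ ((1 : ℝ) / 2) * wnorm s ψ)) := by
        rw [norm_neg, norm_div, norm_one, norm_mul, Complex.norm_two]
        gcongr
        exact hψ.norm_integral_mul_le (by positivity) (k.cast_nonneg.trans hka) has hkernel
    _ = _ := by
        rw [← hpow]
        field_simp

end Remainder

lemma exists_wnorm_resolventRemainder_le {k : ℕ} {s s' a : ℝ} (hka : k ≤ a) (hak : a ≤ k + 1)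
    (has : a - s < -(1 / 2)) (has' : a - s' < -(1 / 2)) :
    ∃ C : ℝ, ∀ z : ℂ, z ≠ 0 → 0 ≤ z.im → ∀ ψ : ℝ → ℂ, MemL2s s ψ →
      wnorm (-s') (resolventRemainder k z ψ) ≤ C * ‖z‖ ^ ((a - 1) / 2) * wnorm s ψ := by
  refine ⟨(k + 2) / 2 * 2 ^ (a / 2) * (∫ y : ℝ, (1 + y ^ 2) ^ (a - s)) ^ ((1 : ℝ) / 2) *
    (∫ x : ℝ, (1 + x ^ 2) ^ (a - s')) ^ ((1 : ℝ) / 2), fun z hz him ψ hψ => ?_⟩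
  refine (wnorm_neg_le_of_norm_le (by have := wnorm_nonneg s ψ; positivity) has'
    (norm_resolventRemainder_le hψ hz him hka hak has)).trans_eq ?_
  ring

lemma exists_pos_forall_mul_rpow_le (C : ℝ) {ε p q : ℝ} (hε : 0 < ε) (hpq : p < q) :
    ∃ δ > 0, ∀ t : ℝ, 0 < t → t < δ → C * t ^ q ≤ ε * t ^ p := by
  refine ⟨(ε / (|C| + 1)) ^ (q - p)⁻¹, by positivity, fun t ht htδ => ?_⟩
  have hsmall : t ^ (q - p) ≤ ε / (|C| + 1) := by
    calc t ^ (q - p) ≤ ((ε / (|C| + 1)) ^ (q - p)⁻¹) ^ (q - p) := by gcongr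
      _ = ε / (|C| + 1) := by
          rw [← Real.rpow_mul (by positivity), inv_mul_cancel₀ (by linarith), Real.rpow_one]
  calc C * t ^ q = C * t ^ (q - p) * t ^ p := by
        rw [mul_assoc, ← Real.rpow_add ht, sub_add_cancel]
    _ ≤ |C| * (ε / (|C| + 1)) * t ^ p := by
        gcongr
        exact le_abs_self C
    _ ≤ ε * t ^ p := by
        gcongr
        rw [mul_div_assoc', div_le_iff₀ (by positivity)]
        nlinarith [abs_nonneg C]

/-- The remainder of the small-energy expansion of the free resolvent up to order `k`
is `o(|z|^{(k−1)/2})` as `z → 0` in the closed upper half-plane, in the operator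
norm from `L^{2,s}(ℝ)` to `L^{2,−s'}(ℝ)` with `s, s' > k + 1/2`. -/
theorem stmt5 (k : ℕ) (s s' : ℝ) (hs : s > (k : ℝ) + 1 / 2) (hs' : s' > (k : ℝ) + 1 / 2) :
    ∀ ε > (0 : ℝ), ∃ δ > (0 : ℝ), ∀ z : ℂ, z ≠ 0 → 0 ≤ z.im → ‖z‖ < δ →
      ∀ ψ : ℝ → ℂ, MemL2s s ψ →
        wnorm (-s') (fun x : ℝ =>
            R0 z ψ x -
              ∑ j ∈ Finset.range (k + 1),
                (Complex.I * z ^ ((1 : ℂ) / 2)) ^ ((j : ℤ) - 1) * Gop j ψ x)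
          ≤ ε * ‖z‖ ^ (((k : ℝ) - 1) / 2) * wnorm s ψ := by
  intro ε hε
  obtain ⟨a, hka, ha⟩ := exists_between (lt_min (lt_add_one (k : ℝ))
    (lt_min (by linarith : (k : ℝ) < s - 1 / 2) (by linarith : (k : ℝ) < s' - 1 / 2)))
  obtain ⟨hak, has, has'⟩ := lt_min_iff.1 ha |>.imp_right lt_min_iff.1
  obtain ⟨C, hC⟩ := exists_wnorm_resolventRemainder_le (s := s) (s' := s') hka.le hak.le
    (by linarith) (by linarith)
  obtain ⟨δ, hδ, hδC⟩ := exists_pos_forall_mul_rpow_le C hε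
    (show ((k : ℝ) - 1) / 2 < (a - 1) / 2 by linarith)
  refine ⟨δ, hδ, fun z hz him hzδ ψ hψ => (hC z hz him ψ hψ).trans ?_⟩
  exact mul_le_mul_of_nonneg_right (hδC ‖z‖ (norm_pos_iff.2 hz) hzδ) (wnorm_nonneg s ψ)
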